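/- arXiv:2206.00121 — 5 statements merged into one kernel-verified Lean document; each statement's English description precedes it below -/
import Mathlib

section
/- Let W = (w_{n,m}) be a weight matrix, μ ∈ ℝ^{K×M} a matrix of means with associated mixed means μ', unique best arms k_m* and positive gaps Δ'. Define T*_W(μ) := inf over t ∈ (ℝ₊*)^{K×M} of Σ_{k,m} t_{k,m} subject to: for every agent m and every arm k ≠ k_m*, Σ_{n=1}^M w_{n,m}² (1/t_{k,n} + 1/t_{k_m*,n}) ≤ (Δ'_{k,m})²/2; and define the relaxed quantity T̃*_W(μ) := inf over t ∈ (ℝ₊*)^{K×M} of Σ_{k,m} t_{k,m} subject to: for every agent m and every arm k ∈ [K], Σ_{n=1}^M w_{n,m}²/t_{k,n} ≤ (Δ'_{k,m})²/2. Then T̃*_W(μ) ≤ T*_W(μ) ≤ 2 T̃*_W(μ). -/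
open Finset

private lemma inf_helper (A B : Set ℝ) (hAne : A.Nonempty)
    (hA0 : ∀ S ∈ A, 0 ≤ S) (hB0 : ∀ S ∈ B, 0 ≤ S)
    (hAB : A ⊆ B) (hdouble : ∀ S ∈ B, 2 * S ∈ A) :
    sInf B ≤ sInf A ∧ sInf A ≤ 2 * sInf B := by
  have hbA : BddBelow A := ⟨0, fun S hS => hA0 S hS⟩
  have hbB : BddBelow B := ⟨0, fun S hS => hB0 S hS⟩
  have hBne : B.Nonempty := ⟨hAne.choose, hAB hAne.choose_spec⟩
  constructor
  · exact csInf_le_csInf hbB hAne hAB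
  · have h1 : ∀ S ∈ B, sInf A ≤ 2 * S := fun S hS => csInf_le hbA (hdouble S hS)
    have h2 : sInf A / 2 ≤ sInf B := le_csInf hBne (fun S hS => by linarith [h1 S hS])
    linarith

/-- `T̃*_W(μ) ≤ T*_W(μ) ≤ 2 T̃*_W(μ)` (Lemma 1 of the paper). -/
theorem stmt_0 (K M : ℕ) (hK : 1 ≤ K) (hM : 1 ≤ M)
    (w : Fin M → Fin M → ℝ)
    (hw01 : ∀ n m, w n m ∈ Set.Icc (0 : ℝ) 1)
    (hwsum : ∀ m, ∑ n, w n m = 1)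
    (μ μ' : Fin K → Fin M → ℝ)
    (hμ' : ∀ k m, μ' k m = ∑ n, w n m * μ k n)
    (kstar : Fin M → Fin K)
    (hbest : ∀ m, ∀ k, k ≠ kstar m → μ' k m < μ' (kstar m) m)
    (Δ' : Fin K → Fin M → ℝ)
    (hgap : ∀ m, ∀ k, k ≠ kstar m → Δ' k m = μ' (kstar m) m - μ' k m)
    (hgapstar : ∀ m, IsLeast {d : ℝ | ∃ k, k ≠ kstar m ∧ d = Δ' k m} (Δ' (kstar m) m))
    (hgappos : ∀ k m, 0 < Δ' k m)
    (Tstar Ttilde : ℝ)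
    (hT : Tstar = sInf {S : ℝ | ∃ t : Fin K → Fin M → ℝ,
      (∀ k m, 0 < t k m) ∧
      (∀ m, ∀ k, k ≠ kstar m →
        ∑ n, (w n m) ^ 2 * (1 / t k n + 1 / t (kstar m) n) ≤ (Δ' k m) ^ 2 / 2) ∧
      S = ∑ k, ∑ m, t k m})
    (hTt : Ttilde = sInf {S : ℝ | ∃ t : Fin K → Fin M → ℝ,
      (∀ k m, 0 < t k m) ∧
      (∀ m, ∀ k, ∑ n, (w n m) ^ 2 / t k n ≤ (Δ' k m) ^ 2 / 2) ∧
      S = ∑ k, ∑ m, t k m}) :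
    Ttilde ≤ Tstar ∧ Tstar ≤ 2 * Ttilde := by
  haveI : NeZero K := ⟨Nat.one_le_iff_ne_zero.mp hK⟩
  haveI : NeZero M := ⟨Nat.one_le_iff_ne_zero.mp hM⟩
  have hΔle : ∀ m k, k ≠ kstar m → Δ' (kstar m) m ≤ Δ' k m := fun m k hk =>
    (hgapstar m).2 ⟨k, hk, rfl⟩
  have hkex : ∀ m, ∃ k0, k0 ≠ kstar m ∧ Δ' (kstar m) m = Δ' k0 m := fun m =>
    (hgapstar m).1
  rw [hT, hTt]
  apply inf_helper
  -- A nonempty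
  · -- construct a feasible point for the Tstar program
    have hne : (Finset.univ : Finset (Fin K × Fin M)).Nonempty := Finset.univ_nonempty
    set δ : ℝ := Finset.univ.inf' hne (fun p : Fin K × Fin M => (Δ' p.1 p.2) ^ 2 / 2) with hδdef
    have hδpos : 0 < δ := by
      rw [hδdef, Finset.lt_inf'_iff]
      intro p _
      have := hgappos p.1 p.2
      positivity
    have hδle : ∀ k m, δ ≤ (Δ' k m) ^ 2 / 2 := fun k m =>
      Finset.inf'_le _ (Finset.mem_univ (k, m))
    set c : ℝ := (2 * M + 1) / δ with hcdef
    have hMpos : (0:ℝ) < 2 * M + 1 := by positivity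
    have hcpos : 0 < c := by positivity
    refine ⟨∑ k : Fin K, ∑ m : Fin M, c, fun _ _ => c, fun _ _ => hcpos, ?_, rfl⟩
    intro m k _
    have hwsq : ∀ n : Fin M, (w n m) ^ 2 ≤ 1 := fun n => by
      have h := hw01 n m
      nlinarith [h.1, h.2]
    have h1c : 1 / c = δ / (2 * M + 1) := by
      rw [hcdef, one_div_div]
    calc ∑ n : Fin M, (w n m) ^ 2 * (1 / c + 1 / c)
        ≤ ∑ n : Fin M, 1 * (1 / c + 1 / c) := by
          apply Finset.sum_le_sum
          intro n _
          have : 0 ≤ 1 / c + 1 / c := by positivity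
          exact mul_le_mul_of_nonneg_right (hwsq n) this
      _ = M * (2 * (δ / (2 * M + 1))) := by
          rw [Finset.sum_const, card_univ, Fintype.card_fin, h1c]
          push_cast; ring
      _ ≤ δ := by
          have h : (M:ℝ) * (2 * (δ / (2*M+1))) = (2*M) * δ / (2*M+1) := by ring
          rw [h, div_le_iff₀ hMpos]
          nlinarith
      _ ≤ (Δ' k m) ^ 2 / 2 := hδle k m
  -- A nonneg
  · rintro S ⟨t, hpos, -, rfl⟩
    exact Finset.sum_nonneg fun k _ => Finset.sum_nonneg fun m _ => (hpos k m).le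
  -- B nonneg
  · rintro S ⟨t, hpos, -, rfl⟩
    exact Finset.sum_nonneg fun k _ => Finset.sum_nonneg fun m _ => (hpos k m).le
  -- A ⊆ B
  · rintro S ⟨t, hpos, hcon, rfl⟩
    refine ⟨t, hpos, ?_, rfl⟩
    intro m k
    have key : ∀ k' : Fin K,
        (∑ n : Fin M, (w n m) ^ 2 / t k n) ≤
        ∑ n : Fin M, (w n m) ^ 2 * (1 / t k n + 1 / t k' n) := by
      intro k'
      apply Finset.sum_le_sum
      intro n _
      rw [div_eq_mul_one_div]
      apply mul_le_mul_of_nonneg_left _ (sq_nonneg _)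
      have : 0 < 1 / t k' n := one_div_pos.mpr (hpos k' n)
      linarith
    by_cases hk : k = kstar m
    · obtain ⟨k0, hk0, heq⟩ := hkex m
      rw [hk, heq]
      calc (∑ n : Fin M, (w n m) ^ 2 / t (kstar m) n)
          ≤ ∑ n : Fin M, (w n m) ^ 2 * (1 / t k0 n + 1 / t (kstar m) n) := by
            apply Finset.sum_le_sum
            intro n _
            rw [div_eq_mul_one_div]
            apply mul_le_mul_of_nonneg_left _ (sq_nonneg _)
            have : 0 < 1 / t k0 n := one_div_pos.mpr (hpos k0 n)
            linarith
        _ ≤ (Δ' k0 m) ^ 2 / 2 := hcon m k0 hk0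
    · exact le_trans (key (kstar m)) (hcon m k hk)
  -- doubling
  · rintro S ⟨t, hpos, hcon, rfl⟩
    refine ⟨fun k m => 2 * t k m, fun k m => by have := hpos k m; positivity, ?_, ?_⟩
    · intro m k hk
      have hsplit : ∀ n : Fin M,
          (w n m) ^ 2 * (1 / (2 * t k n) + 1 / (2 * t (kstar m) n)) =
          ((w n m) ^ 2 / t k n) / 2 + ((w n m) ^ 2 / t (kstar m) n) / 2 := by
        intro n
        have h1 := (hpos k n).ne'
        have h2 := (hpos (kstar m) n).ne'
        field_simp
      calc ∑ n : Fin M, (w n m) ^ 2 * (1 / (2 * t k n) + 1 / (2 * t (kstar m) n))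
          = (∑ n : Fin M, (w n m) ^ 2 / t k n) / 2
            + (∑ n : Fin M, (w n m) ^ 2 / t (kstar m) n) / 2 := by
            rw [Finset.sum_congr rfl fun n _ => hsplit n, Finset.sum_add_distrib,
              Finset.sum_div, Finset.sum_div]
        _ ≤ ((Δ' k m) ^ 2 / 2) / 2 + ((Δ' (kstar m) m) ^ 2 / 2) / 2 := by
            have h1 := hcon m k
            have h2 := hcon m (kstar m)
            linarith
        _ ≤ (Δ' k m) ^ 2 / 2 := by
            nlinarith [hgappos k m, hgappos (kstar m) m, hΔle m k hk]
    · rw [Finset.mul_sum]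
      exact Finset.sum_congr rfl fun k _ => by rw [Finset.mul_sum]
end

section
/- Let W be a weight matrix, μ ∈ ℝ^{K×M} with mixed means μ', unique best arms k_m* and positive gaps Δ'. Define the regret complexity C*_W(μ) := inf over c = (c_{k,m})_{k,m: k ≠ k_m*} with positive entries of Σ_k Σ_{m: k_m* ≠ k} c_{k,m} Δ'_{k,m} subject to: for every k ∈ [K] and m ∈ [M], Σ_{n: k_n* ≠ k} w_{n,m}²/c_{k,n} ≤ (Δ'_{k,m})²/2; and the relaxed quantity C̃*_W(μ) := inf over c ∈ (ℝ₊*)^{K×M} of Σ_{k=1}^K Σ_{m=1}^M c_{k,m} Δ'_{k,m} subject to: for every k ∈ [K] and m ∈ [M], Σ_{n=1}^M w_{n,m}²/c_{k,n} ≤ (Δ'_{k,m})²/2. Then C*_W(μ) ≤ C̃*_W(μ) ≤ 4 C*_W(μ). -/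
open Finset

/-- `C*_W(μ) ≤ C̃*_W(μ) ≤ 4 C*_W(μ)` (Lemma 5 of the paper).
In `C*_W(μ)` the variables `c_{k,m}` only exist for pairs with `kstar m ≠ k`;
constraint sums range only over agents `n` with `kstar n ≠ k`. -/
theorem stmt_3 (K M : ℕ) (hK : 1 ≤ K) (hM : 1 ≤ M)
    (w : Fin M → Fin M → ℝ)
    (hw01 : ∀ n m, w n m ∈ Set.Icc (0 : ℝ) 1)
    (hwsum : ∀ m, ∑ n, w n m = 1)
    (μ μ' : Fin K → Fin M → ℝ)
    (hμ' : ∀ k m, μ' k m = ∑ n, w n m * μ k n)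
    (kstar : Fin M → Fin K)
    (hbest : ∀ m, ∀ k, k ≠ kstar m → μ' k m < μ' (kstar m) m)
    (Δ' : Fin K → Fin M → ℝ)
    (hgap : ∀ m, ∀ k, k ≠ kstar m → Δ' k m = μ' (kstar m) m - μ' k m)
    (hgapstar : ∀ m, IsLeast {d : ℝ | ∃ k, k ≠ kstar m ∧ d = Δ' k m} (Δ' (kstar m) m))
    (hgappos : ∀ k m, 0 < Δ' k m)
    (Cstar Ctilde : ℝ)
    (hC : Cstar = sInf {S : ℝ | ∃ c : Fin K → Fin M → ℝ,
      (∀ k m, kstar m ≠ k → 0 < c k m) ∧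
      (∀ k m, ∑ n ∈ univ.filter (fun n => kstar n ≠ k), (w n m) ^ 2 / c k n
        ≤ (Δ' k m) ^ 2 / 2) ∧
      S = ∑ k, ∑ m ∈ univ.filter (fun m => kstar m ≠ k), c k m * Δ' k m})
    (hCt : Ctilde = sInf {S : ℝ | ∃ c : Fin K → Fin M → ℝ,
      (∀ k m, 0 < c k m) ∧
      (∀ k m, ∑ n, (w n m) ^ 2 / c k n ≤ (Δ' k m) ^ 2 / 2) ∧
      S = ∑ k, ∑ m, c k m * Δ' k m}) :
    Cstar ≤ Ctilde ∧ Ctilde ≤ 4 * Cstar := by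
  classical
  have hmK : Nonempty (Fin K) := ⟨⟨0, hK⟩⟩
  have hmM : Nonempty (Fin M) := ⟨⟨0, hM⟩⟩
  set A : Set ℝ := {S : ℝ | ∃ c : Fin K → Fin M → ℝ,
      (∀ k m, kstar m ≠ k → 0 < c k m) ∧
      (∀ k m, ∑ n ∈ univ.filter (fun n => kstar n ≠ k), (w n m) ^ 2 / c k n
        ≤ (Δ' k m) ^ 2 / 2) ∧
      S = ∑ k, ∑ m ∈ univ.filter (fun m => kstar m ≠ k), c k m * Δ' k m} with hAdef
  set B : Set ℝ := {S : ℝ | ∃ c : Fin K → Fin M → ℝ,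
      (∀ k m, 0 < c k m) ∧
      (∀ k m, ∑ n, (w n m) ^ 2 / c k n ≤ (Δ' k m) ^ 2 / 2) ∧
      S = ∑ k, ∑ m, c k m * Δ' k m} with hBdef
  have hΔle : ∀ m k, k ≠ kstar m → Δ' (kstar m) m ≤ Δ' k m := fun m k hk =>
    (hgapstar m).2 ⟨k, hk, rfl⟩
  choose k₂ hk₂ne hk₂eq using fun m => (hgapstar m).1
  -- the minimal bound δ on all (Δ' k m)^2/2
  have hne : (univ : Finset (Fin K × Fin M)).Nonempty := univ_nonempty
  set δ : ℝ := (univ : Finset (Fin K × Fin M)).inf' hne (fun p => (Δ' p.1 p.2) ^ 2 / 2)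
    with hδdef
  have hδpos : 0 < δ := by
    rw [hδdef, Finset.lt_inf'_iff]
    exact fun p _ => div_pos (pow_pos (hgappos p.1 p.2) 2) two_pos
  have hδle : ∀ k m, δ ≤ (Δ' k m) ^ 2 / 2 := fun k m =>
    Finset.inf'_le _ (mem_univ (k, m))
  set T : ℝ := (M : ℝ) / δ + 1 with hTdef
  have hTpos : 0 < T := by positivity
  have hMT : (M : ℝ) / T ≤ δ := by
    rw [div_le_iff₀ hTpos, hTdef]
    have hM0 : (0:ℝ) ≤ (M : ℝ) := Nat.cast_nonneg _
    have : δ * ((M : ℝ) / δ) = (M : ℝ) := by field_simp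
    nlinarith
  have hkey : ∀ (m : Fin M) (s : Finset (Fin M)), ∑ n ∈ s, (w n m) ^ 2 / T ≤ (M : ℝ) / T := by
    intro m s
    calc ∑ n ∈ s, (w n m) ^ 2 / T ≤ ∑ n : Fin M, (1 : ℝ) / T := by
          refine le_trans (sum_le_sum_of_subset_of_nonneg (subset_univ s)
            (fun n _ _ => div_nonneg (sq_nonneg _) hTpos.le)) ?_
          refine sum_le_sum fun n _ => ?_
          have h := hw01 n m
          have h1 : (w n m) ^ 2 ≤ 1 := by nlinarith [h.1, h.2]
          gcongr
      _ = (M : ℝ) / T := by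
          rw [sum_const, card_univ, Fintype.card_fin, nsmul_eq_mul, mul_one_div]
  have hconstT : ∀ (k : Fin K) (m : Fin M) (s : Finset (Fin M)),
      ∑ n ∈ s, (w n m) ^ 2 / T ≤ (Δ' k m) ^ 2 / 2 :=
    fun k m s => (hkey m s).trans (hMT.trans (hδle k m))
  have hAne : A.Nonempty :=
    ⟨_, fun _ _ => T, fun _ _ _ => hTpos, fun k m => hconstT k m _, rfl⟩
  have hBne : B.Nonempty :=
    ⟨_, fun _ _ => T, fun _ _ => hTpos, fun k m => hconstT k m _, rfl⟩
  have hA0 : ∀ S ∈ A, (0 : ℝ) ≤ S := by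
    rintro S ⟨c, hpos, -, rfl⟩
    refine sum_nonneg fun k _ => sum_nonneg fun m hm => ?_
    have hm' : kstar m ≠ k := (mem_filter.1 hm).2
    exact mul_nonneg (hpos k m hm').le (hgappos k m).le
  have hAbdd : BddBelow A := ⟨0, fun S hS => hA0 S hS⟩
  have hB0 : ∀ S ∈ B, (0 : ℝ) ≤ S := by
    rintro S ⟨c, hpos, -, rfl⟩
    exact sum_nonneg fun k _ => sum_nonneg fun m _ =>
      mul_nonneg (hpos k m).le (hgappos k m).le
  have hBbdd : BddBelow B := ⟨0, fun S hS => hB0 S hS⟩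
  constructor
  · -- Cstar ≤ Ctilde
    rw [hC, hCt]
    apply le_csInf hBne
    rintro S ⟨c, hpos, hcon, rfl⟩
    have hmem : (∑ k, ∑ m ∈ univ.filter (fun m => kstar m ≠ k), c k m * Δ' k m) ∈ A := by
      refine ⟨c, fun k m _ => hpos k m, fun k m => ?_, rfl⟩
      refine le_trans (sum_le_sum_of_subset_of_nonneg (filter_subset _ _) ?_) (hcon k m)
      intro n _ _
      exact div_nonneg (sq_nonneg _) (hpos k n).le
    refine le_trans (csInf_le hAbdd hmem) ?_
    refine sum_le_sum fun k _ => ?_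
    exact sum_le_sum_of_subset_of_nonneg (filter_subset _ _)
      (fun m _ _ => mul_nonneg (hpos k m).le (hgappos k m).le)
  · -- Ctilde ≤ 4 * Cstar
    rw [hC, hCt]
    have hmain : ∀ S ∈ A, sInf B ≤ 4 * S := by
      rintro S ⟨c, hpos, hcon, rfl⟩
      set F : Fin M → Finset (Fin K) := fun m => univ.filter (fun k' => k' ≠ kstar m) with hF
      have hFne : ∀ m, (F m).Nonempty := fun m => ⟨k₂ m, mem_filter.2 ⟨mem_univ _, hk₂ne m⟩⟩
      set c' : Fin K → Fin M → ℝ := fun k m =>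
        if k = kstar m then 2 * (F m).sup' (hFne m) (fun k' => c k' m) else 2 * c k m with hc'
      have hsuppos : ∀ m, 0 < (F m).sup' (hFne m) (fun k' => c k' m) := by
        intro m
        have hmem2 : k₂ m ∈ F m := mem_filter.2 ⟨mem_univ _, hk₂ne m⟩
        have h1 : c (k₂ m) m ≤ (F m).sup' (hFne m) (fun k' => c k' m) :=
          Finset.le_sup' (fun k' => c k' m) hmem2
        exact (hpos (k₂ m) m (hk₂ne m).symm).trans_le h1
      have hc'pos : ∀ k m, 0 < c' k m := by
        intro k m
        rw [hc']
        dsimp only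
        split
        · exact mul_pos two_pos (hsuppos m)
        · next h => exact mul_pos two_pos (hpos k m (Ne.symm h))
      -- constraints for c'
      have hc'con : ∀ k m, ∑ n, (w n m) ^ 2 / c' k n ≤ (Δ' k m) ^ 2 / 2 := by
        intro k m
        rw [← Finset.sum_filter_add_sum_filter_not univ (fun n => kstar n ≠ k)
          (fun n => (w n m) ^ 2 / c' k n)]
        have h1 : ∑ n ∈ univ.filter (fun n => kstar n ≠ k), (w n m) ^ 2 / c' k n
            ≤ (Δ' k m) ^ 2 / 4 := by
          have e1 : ∀ n ∈ univ.filter (fun n => kstar n ≠ k),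
              (w n m) ^ 2 / c' k n = ((w n m) ^ 2 / c k n) / 2 := by
            intro n hn
            have hn' : kstar n ≠ k := (mem_filter.1 hn).2
            rw [hc']
            dsimp only
            rw [if_neg (Ne.symm hn'), div_div, mul_comm]
          rw [Finset.sum_congr rfl e1, ← sum_div]
          have := hcon k m
          linarith
        have h2 : ∑ n ∈ univ.filter (fun n => ¬kstar n ≠ k), (w n m) ^ 2 / c' k n
            ≤ (Δ' k m) ^ 2 / 4 := by
          set k' : Fin K := if k = kstar m then k₂ m else kstar m with hk'def
          have hk'ne : k' ≠ k := by
            rw [hk'def]; split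
            · next h => rw [h]; exact hk₂ne m
            · next h => exact Ne.symm h
          have hΔk' : Δ' k' m ≤ Δ' k m := by
            rw [hk'def]; split
            · next h => rw [h, ← hk₂eq m]
            · next h => exact hΔle m k h
          have step1 : ∑ n ∈ univ.filter (fun n => ¬kstar n ≠ k), (w n m) ^ 2 / c' k n
              ≤ ∑ n ∈ univ.filter (fun n => ¬kstar n ≠ k), (w n m) ^ 2 / (2 * c k' n) := by
            refine sum_le_sum fun n hn => ?_
            have hn' : kstar n = k := not_not.1 (mem_filter.1 hn).2
            have hck'pos : 0 < c k' n := hpos k' n (by rw [hn']; exact Ne.symm hk'ne)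
            have hmem : k' ∈ F n := mem_filter.2 ⟨mem_univ _, by rw [hn']; exact hk'ne⟩
            have hle : c k' n ≤ (F n).sup' (hFne n) (fun kk => c kk n) :=
              Finset.le_sup' (fun kk => c kk n) hmem
            have hceq : c' k n = 2 * (F n).sup' (hFne n) (fun kk => c kk n) := by
              rw [hc']; dsimp only; rw [if_pos hn'.symm]
            rw [hceq]
            gcongr
          have step2 : ∑ n ∈ univ.filter (fun n => ¬kstar n ≠ k), (w n m) ^ 2 / (2 * c k' n)
              ≤ ∑ n ∈ univ.filter (fun n => kstar n ≠ k'), (w n m) ^ 2 / (2 * c k' n) := by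
            refine sum_le_sum_of_subset_of_nonneg ?_ ?_
            · intro n hn
              have hn' : kstar n = k := not_not.1 (mem_filter.1 hn).2
              exact mem_filter.2 ⟨mem_univ _, by rw [hn']; exact Ne.symm hk'ne⟩
            · intro n hn _
              have hn' : kstar n ≠ k' := (mem_filter.1 hn).2
              have := hpos k' n hn'
              positivity
          have step3 : ∑ n ∈ univ.filter (fun n => kstar n ≠ k'), (w n m) ^ 2 / (2 * c k' n)
              ≤ (Δ' k' m) ^ 2 / 4 := by
            have e1 : ∀ n ∈ univ.filter (fun n => kstar n ≠ k'),
                (w n m) ^ 2 / (2 * c k' n) = ((w n m) ^ 2 / c k' n) / 2 := by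
              intro n _
              rw [div_div, mul_comm]
            rw [Finset.sum_congr rfl e1, ← sum_div]
            have := hcon k' m
            linarith
          have hΔsq : (Δ' k' m) ^ 2 ≤ (Δ' k m) ^ 2 :=
            pow_le_pow_left₀ (hgappos k' m).le hΔk' 2
          calc ∑ n ∈ univ.filter (fun n => ¬kstar n ≠ k), (w n m) ^ 2 / c' k n
              ≤ (Δ' k' m) ^ 2 / 4 := le_trans step1 (le_trans step2 step3)
            _ ≤ (Δ' k m) ^ 2 / 4 := by linarith
        linarith
      -- objective bound
      have hobj : ∑ k, ∑ m, c' k m * Δ' k m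
          ≤ 4 * ∑ k, ∑ m ∈ univ.filter (fun m => kstar m ≠ k), c k m * Δ' k m := by
        have split : ∀ k : Fin K, ∑ m, c' k m * Δ' k m =
            ∑ m ∈ univ.filter (fun m => kstar m ≠ k), c' k m * Δ' k m
            + ∑ m ∈ univ.filter (fun m => ¬kstar m ≠ k), c' k m * Δ' k m :=
          fun k => (Finset.sum_filter_add_sum_filter_not univ _ _).symm
        rw [Finset.sum_congr rfl (fun k _ => split k), Finset.sum_add_distrib]
        have hpart1 : ∑ k, ∑ m ∈ univ.filter (fun m => kstar m ≠ k), c' k m * Δ' k m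
            = 2 * ∑ k, ∑ m ∈ univ.filter (fun m => kstar m ≠ k), c k m * Δ' k m := by
          rw [Finset.mul_sum]
          refine sum_congr rfl fun k _ => ?_
          rw [Finset.mul_sum]
          refine sum_congr rfl fun m hm => ?_
          have hm' : kstar m ≠ k := (mem_filter.1 hm).2
          rw [hc']; dsimp only; rw [if_neg (Ne.symm hm')]; ring
        have hterm : ∀ k : Fin K, ∀ m ∈ univ.filter (fun m => ¬kstar m ≠ k),
            c' k m * Δ' k m ≤ 2 * ∑ kk ∈ F m, c kk m * Δ' kk m := by
          intro k m hm
          have hm' : kstar m = k := not_not.1 (mem_filter.1 hm).2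
          have hceq : c' k m = 2 * (F m).sup' (hFne m) (fun kk => c kk m) := by
            rw [hc']; dsimp only; rw [if_pos hm'.symm]
          obtain ⟨kp, hkpmem, hkp⟩ := Finset.exists_mem_eq_sup' (hFne m) (fun kk => c kk m)
          have hkpne : kp ≠ kstar m := (mem_filter.1 hkpmem).2
          have hkppos : 0 < c kp m := hpos kp m hkpne.symm
          have h1 : c kp m * Δ' k m ≤ c kp m * Δ' kp m := by
            have hΔ : Δ' k m ≤ Δ' kp m := by
              rw [← hm']; exact hΔle m kp hkpne
            exact mul_le_mul_of_nonneg_left hΔ hkppos.le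
          have h2 : c kp m * Δ' kp m ≤ ∑ kk ∈ F m, c kk m * Δ' kk m := by
            refine Finset.single_le_sum (f := fun kk => c kk m * Δ' kk m) (fun kk hkk => ?_) hkpmem
            have : kk ≠ kstar m := (mem_filter.1 hkk).2
            exact mul_nonneg (hpos kk m this.symm).le (hgappos kk m).le
          calc c' k m * Δ' k m
              = 2 * (c kp m * Δ' k m) := by rw [hceq, hkp]; ring
            _ ≤ 2 * (c kp m * Δ' kp m) := by linarith
            _ ≤ 2 * ∑ kk ∈ F m, c kk m * Δ' kk m := by linarith
        have hfiber : ∑ k, ∑ m ∈ univ.filter (fun m => ¬kstar m ≠ k),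
            (2 * ∑ kk ∈ F m, c kk m * Δ' kk m)
            = 2 * ∑ m, ∑ kk ∈ F m, c kk m * Δ' kk m := by
          simp only [ne_eq, not_not]
          rw [Finset.sum_fiberwise_of_maps_to (fun m _ => mem_univ (kstar m))
            (fun m => 2 * ∑ kk ∈ F m, c kk m * Δ' kk m), Finset.mul_sum]
        have hswap : ∑ m, ∑ kk ∈ F m, c kk m * Δ' kk m
            = ∑ k, ∑ m ∈ univ.filter (fun m => kstar m ≠ k), c k m * Δ' k m := by
          rw [hF]
          calc ∑ m, ∑ kk ∈ univ.filter (fun k' => k' ≠ kstar m), c kk m * Δ' kk m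
              = ∑ m, ∑ kk, if kk ≠ kstar m then c kk m * Δ' kk m else 0 := by
                exact sum_congr rfl fun m _ => sum_filter _ _
            _ = ∑ kk, ∑ m, if kk ≠ kstar m then c kk m * Δ' kk m else 0 := Finset.sum_comm
            _ = ∑ k, ∑ m ∈ univ.filter (fun m => kstar m ≠ k), c k m * Δ' k m := by
                refine sum_congr rfl fun k _ => ?_
                rw [sum_filter]
                refine sum_congr rfl fun m _ => ?_
                simp only [ne_comm]
        have hpart2 : ∑ k, ∑ m ∈ univ.filter (fun m => ¬kstar m ≠ k), c' k m * Δ' k m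
            ≤ 2 * ∑ k, ∑ m ∈ univ.filter (fun m => kstar m ≠ k), c k m * Δ' k m := by
          calc ∑ k, ∑ m ∈ univ.filter (fun m => ¬kstar m ≠ k), c' k m * Δ' k m
              ≤ ∑ k, ∑ m ∈ univ.filter (fun m => ¬kstar m ≠ k),
                  (2 * ∑ kk ∈ F m, c kk m * Δ' kk m) :=
                sum_le_sum fun k _ => sum_le_sum fun m hm => hterm k m hm
            _ = 2 * ∑ m, ∑ kk ∈ F m, c kk m * Δ' kk m := hfiber
            _ = 2 * ∑ k, ∑ m ∈ univ.filter (fun m => kstar m ≠ k), c k m * Δ' k m := by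
                rw [hswap]
          done
        linarith
      have hmemB : (∑ k, ∑ m, c' k m * Δ' k m) ∈ B := ⟨c', hc'pos, hc'con, rfl⟩
      exact le_trans (csInf_le hBbdd hmemB) hobj
    have h4 : sInf B / 4 ≤ sInf A := by
      refine le_csInf hAne fun S hS => ?_
      have := hmain S hS
      linarith
    linarith
end

section
/- Let M ≥ 1, let β : ℕ^M → ℝ₊* be nondecreasing in each coordinate, let n ∈ (ℕ*)^M and t ∈ (ℝ₊*)^M. Suppose the feasible set D := { d ∈ ℕ^M : for all m ∈ [M], (n_m + d_m)/β(n + d) ≥ t_m } is nonempty and let d* ∈ D minimize Σ_{m=1}^M d_m over D. Then for every m ∈ [M], either d*_m = 0 or n_m + d*_m < t_m · β(n + d*) + 1. -/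
open Finset

/-- Lemma 12 of the paper: for a minimizer `d*` of the integer program
`min Σ d_m  s.t.  (n_m + d_m)/β(n+d) ≥ t_m`, every coordinate is either `0` or
does not overshoot: `n_m + d*_m < t_m β(n + d*) + 1`. -/
theorem stmt_7 (M : ℕ) (hM : 1 ≤ M)
    (β : (Fin M → ℕ) → ℝ) (hβpos : ∀ v, 0 < β v)
    (hβmono : ∀ u v : Fin M → ℕ, (∀ m, u m ≤ v m) → β u ≤ β v)
    (n : Fin M → ℕ) (hn : ∀ m, 0 < n m)
    (t : Fin M → ℝ) (ht : ∀ m, 0 < t m)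
    (dstar : Fin M → ℕ)
    (hfeas : ∀ m, ((n m + dstar m : ℕ) : ℝ) / β (fun i => n i + dstar i) ≥ t m)
    (hmin : ∀ d : Fin M → ℕ,
      (∀ m, ((n m + d m : ℕ) : ℝ) / β (fun i => n i + d i) ≥ t m) →
      ∑ m, dstar m ≤ ∑ m, d m) :
    ∀ m, dstar m = 0 ∨
      ((n m + dstar m : ℕ) : ℝ) < t m * β (fun i => n i + dstar i) + 1 := by
  intro m
  by_cases h0 : dstar m = 0
  · exact Or.inl h0
  right
  by_contra hov
  push_neg at hov
  -- hov : t m * β (...) + 1 ≤ n m + dstar m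
  set d' : Fin M → ℕ := Function.update dstar m (dstar m - 1) with hd'
  have hle : ∀ i, d' i ≤ dstar i := by
    intro i
    by_cases hi : i = m
    · subst hi; simp only [hd', Function.update_self]; omega
    · simp [hd', Function.update_of_ne hi]
  have hβle : β (fun i => n i + d' i) ≤ β (fun i => n i + dstar i) :=
    hβmono _ _ (fun i => by have := hle i; omega)
  have hfeas' : ∀ k, ((n k + d' k : ℕ) : ℝ) / β (fun i => n i + d' i) ≥ t k := by
    intro k
    have hβp := hβpos (fun i => n i + d' i)
    rw [ge_iff_le, le_div_iff₀ hβp]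
    by_cases hk : k = m
    · rw [hk]
      have hdm : 1 ≤ dstar m := Nat.one_le_iff_ne_zero.mpr h0
      have : ((n m + d' m : ℕ) : ℝ) = ((n m + dstar m : ℕ) : ℝ) - 1 := by
        simp only [hd', Function.update_self]
        push_cast [Nat.cast_sub hdm]
        ring
      rw [this]
      have h1 : t m * β (fun i => n i + d' i) ≤ t m * β (fun i => n i + dstar i) :=
        mul_le_mul_of_nonneg_left hβle (le_of_lt (ht m))
      linarith
    · have hval : d' k = dstar k := Function.update_of_ne hk _ _
      rw [hval]
      have h2 := hfeas k
      rw [ge_iff_le, le_div_iff₀ (hβpos _)] at h2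
      calc t k * β (fun i => n i + d' i) ≤ t k * β (fun i => n i + dstar i) :=
            mul_le_mul_of_nonneg_left hβle (le_of_lt (ht k))
        _ ≤ _ := h2
  have hsum := hmin d' hfeas'
  have hlt : ∑ i, d' i < ∑ i, dstar i := by
    apply Finset.sum_lt_sum (fun i _ => hle i)
    exact ⟨m, Finset.mem_univ m, by simp only [hd', Function.update_self]; omega⟩
  omega
end

section
/- Let W be a weight matrix, μ ∈ ℝ^{K×M} with mixed means μ', and fix 1 ≤ N ≤ K. For every agent m assume the set S*_m of Top-N arms (the N arms with largest mixed means μ'_{·,m}) is uniquely determined with |S*_m| = N, and define the Top-N gaps Δ'^N_{k,m} := (N-th largest value of μ'_{·,m}) − μ'_{k,m} if k ∉ S*_m, and Δ'^N_{k,m} := μ'_{k,m} − ((N+1)-th largest value of μ'_{·,m}) if k ∈ S*_m; assume all Δ'^N_{k,m} > 0. If t ∈ (ℝ₊*)^{K×M} satisfies, for every m, every k ∉ S*_m and every l ∈ S*_m, Σ_{n=1}^M w_{n,m}² (1/t_{k,n} + 1/t_{l,n}) ≤ (μ'_{l,m} − μ'_{k,m})²/2, then t also satisfies, for every m and every k ∈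 [K], Σ_{n=1}^M w_{n,m}²/t_{k,n} ≤ (Δ'^N_{k,m})²/2. Consequently N*_W(μ) ≥ Ñ*_W(μ), where N*_W(μ) and Ñ*_W(μ) denote the infima of Σ_{k,m} t_{k,m} over the first and the second constraint set, respectively. -/
open Finset

/-- the pairwise Top-N lower-bound constraints imply the relaxed
single-arm constraints with the Top-N gaps, hence `N*_W(μ) ≥ Ñ*_W(μ)`.
Here `θ m` is the N-th largest mixed mean (the least mixed mean over `S*_m`) and
`η m` the (N+1)-th largest (the greatest mixed mean outside `S*_m`). -/
theorem stmt_9 (K M N : ℕ) (hK : 1 ≤ K) (hM : 1 ≤ M) (hN : 1 ≤ N) (hNK : N ≤ K)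
    (w : Fin M → Fin M → ℝ)
    (hw01 : ∀ n m, w n m ∈ Set.Icc (0 : ℝ) 1)
    (hwsum : ∀ m, ∑ n, w n m = 1)
    (μ μ' : Fin K → Fin M → ℝ)
    (hμ' : ∀ k m, μ' k m = ∑ n, w n m * μ k n)
    (Sstar : Fin M → Finset (Fin K))
    (hcard : ∀ m, (Sstar m).card = N)
    (htop : ∀ m, ∀ k ∈ Sstar m, ∀ l ∉ Sstar m, μ' l m < μ' k m)
    (θ η : Fin M → ℝ)
    (hθ : ∀ m, IsLeast {x : ℝ | ∃ k ∈ Sstar m, x = μ' k m} (θ m))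
    (hη : ∀ m, IsGreatest {x : ℝ | ∃ k, k ∉ Sstar m ∧ x = μ' k m} (η m))
    (ΔN : Fin K → Fin M → ℝ)
    (hΔout : ∀ m, ∀ k, k ∉ Sstar m → ΔN k m = θ m - μ' k m)
    (hΔin : ∀ m, ∀ k, k ∈ Sstar m → ΔN k m = μ' k m - η m)
    (hΔpos : ∀ k m, 0 < ΔN k m) :
    (∀ t : Fin K → Fin M → ℝ, (∀ k m, 0 < t k m) →
      (∀ m, ∀ k, k ∉ Sstar m → ∀ l ∈ Sstar m,
        ∑ n, (w n m) ^ 2 * (1 / t k n + 1 / t l n) ≤ (μ' l m - μ' k m) ^ 2 / 2) →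
      (∀ m, ∀ k, ∑ n, (w n m) ^ 2 / t k n ≤ (ΔN k m) ^ 2 / 2)) ∧
    sInf {S : ℝ | ∃ t : Fin K → Fin M → ℝ, (∀ k m, 0 < t k m) ∧
        (∀ m, ∀ k, ∑ n, (w n m) ^ 2 / t k n ≤ (ΔN k m) ^ 2 / 2) ∧
        S = ∑ k, ∑ m, t k m}
      ≤ sInf {S : ℝ | ∃ t : Fin K → Fin M → ℝ, (∀ k m, 0 < t k m) ∧
        (∀ m, ∀ k, k ∉ Sstar m → ∀ l ∈ Sstar m,
          ∑ n, (w n m) ^ 2 * (1 / t k n + 1 / t l n) ≤ (μ' l m - μ' k m) ^ 2 / 2) ∧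
        S = ∑ k, ∑ m, t k m} := by

  have key : ∀ t : Fin K → Fin M → ℝ, (∀ k m, 0 < t k m) →
      (∀ m, ∀ k, k ∉ Sstar m → ∀ l ∈ Sstar m,
        ∑ n, (w n m) ^ 2 * (1 / t k n + 1 / t l n) ≤ (μ' l m - μ' k m) ^ 2 / 2) →
      (∀ m, ∀ k, ∑ n, (w n m) ^ 2 / t k n ≤ (ΔN k m) ^ 2 / 2) := by
    intro t ht h m k
    by_cases hk : k ∈ Sstar m
    · obtain ⟨⟨k', hk', hkeq⟩, -⟩ := hη m
      have hcon := h m k' hk' k hk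
      have hle : ∑ n, (w n m) ^ 2 / t k n ≤
          ∑ n, (w n m) ^ 2 * (1 / t k' n + 1 / t k n) := by
        apply Finset.sum_le_sum
        intro n _
        have h1 : 0 < t k' n := ht k' n
        have h2 : 0 < t k n := ht k n
        rw [div_eq_mul_one_div]
        apply mul_le_mul_of_nonneg_left _ (sq_nonneg _)
        have : 0 < 1 / t k' n := by positivity
        linarith
      rw [hΔin m k hk, hkeq]
      linarith
    · obtain ⟨⟨l, hl, hleq⟩, -⟩ := hθ m
      have hcon := h m k hk l hl
      have hle : ∑ n, (w n m) ^ 2 / t k n ≤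
          ∑ n, (w n m) ^ 2 * (1 / t k n + 1 / t l n) := by
        apply Finset.sum_le_sum
        intro n _
        have h1 : 0 < t l n := ht l n
        have h2 : 0 < t k n := ht k n
        rw [div_eq_mul_one_div]
        apply mul_le_mul_of_nonneg_left _ (sq_nonneg _)
        have : 0 < 1 / t l n := by positivity
        linarith
      rw [hΔout m k hk, hleq]
      linarith
  refine ⟨key, ?_⟩
  haveI : Nonempty (Fin M) := ⟨⟨0, hM⟩⟩
  set d : ℝ := Finset.univ.inf' Finset.univ_nonempty (fun m => θ m - η m) with hd
  have hdpos : 0 < d := by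
    rw [hd]
    rw [Finset.lt_inf'_iff]
    intro m _
    obtain ⟨⟨l, hl, hleq⟩, -⟩ := hθ m
    obtain ⟨⟨k', hk', hkeq⟩, -⟩ := hη m
    have := htop m l hl k' hk'
    rw [hleq, hkeq]
    linarith
  have hdle : ∀ m, d ≤ θ m - η m := fun m =>
    Finset.inf'_le _ (Finset.mem_univ m)
  set c : ℝ := 4 / d ^ 2 with hc
  have hcpos : 0 < c := by positivity
  apply csInf_le_csInf
  · refine ⟨0, ?_⟩
    rintro S ⟨t, ht, -, rfl⟩
    apply Finset.sum_nonneg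
    intro k _
    apply Finset.sum_nonneg
    intro m _
    exact (ht k m).le
  · refine ⟨∑ k : Fin K, ∑ m : Fin M, c, fun _ _ => c, fun _ _ => hcpos, ?_, rfl⟩
    intro m k hk l hl
    have hwle : ∑ n, (w n m) ^ 2 ≤ 1 := by
      rw [← hwsum m]
      apply Finset.sum_le_sum
      intro n _
      obtain ⟨h0, h1⟩ := hw01 n m
      nlinarith
    have hsum : ∑ n, (w n m) ^ 2 * (1 / c + 1 / c) = (2 / c) * ∑ n, (w n m) ^ 2 := by
      rw [Finset.mul_sum]
      apply Finset.sum_congr rfl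
      intro n _
      ring
    have hgap : d ≤ μ' l m - μ' k m := by
      obtain ⟨-, hθub⟩ := hθ m
      obtain ⟨-, hηub⟩ := hη m
      have h1 : θ m ≤ μ' l m := hθub ⟨l, hl, rfl⟩
      have h2 : μ' k m ≤ η m := hηub ⟨k, hk, rfl⟩
      have := hdle m
      linarith
    have hd2 : d ^ 2 ≤ (μ' l m - μ' k m) ^ 2 := by nlinarith
    have h2c : 2 / c = d ^ 2 / 2 := by
      rw [hc]
      field_simp
      ring
    rw [hsum]
    calc (2 / c) * ∑ n, (w n m) ^ 2 ≤ (2 / c) * 1 := by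
          apply mul_le_mul_of_nonneg_left hwle (by positivity)
      _ = d ^ 2 / 2 := by rw [mul_one, h2c]
      _ ≤ (μ' l m - μ' k m) ^ 2 / 2 := by linarith
  · rintro S ⟨t, ht, hcon, rfl⟩
    exact ⟨t, ht, key t ht hcon, rfl⟩
end

section
/- Let W be a weight matrix, μ ∈ ℝ^{K×M} with mixed means μ', unique best arms k_m* and positive gaps Δ'. If t ∈ (ℝ₊*)^{K×M} satisfies the relaxed constraints (for every m ∈ [M] and every k ∈ [K], Σ_{n=1}^M w_{n,m}²/t_{k,n} ≤ (Δ'_{k,m})²/2), then the doubled allocation 2t satisfies the original constraints: for every m ∈ [M] and every k ≠ k_m*, Σ_{n=1}^M w_{n,m}² (1/(2 t_{k,n}) + 1/(2 t_{k_m*,n})) ≤ (Δ'_{k,m})²/2. -/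
open Finset

/-- if `t` satisfies the relaxed constraints then the doubled
allocation `2t` satisfies the original pairwise constraints of `T*_W(μ)`. -/
theorem stmt_11 (K M : ℕ) (hK : 1 ≤ K) (hM : 1 ≤ M)
    (w : Fin M → Fin M → ℝ)
    (hw01 : ∀ n m, w n m ∈ Set.Icc (0 : ℝ) 1)
    (hwsum : ∀ m, ∑ n, w n m = 1)
    (μ μ' : Fin K → Fin M → ℝ)
    (hμ' : ∀ k m, μ' k m = ∑ n, w n m * μ k n)
    (kstar : Fin M → Fin K)
    (hbest : ∀ m, ∀ k, k ≠ kstar m → μ' k m < μ' (kstar m) m)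
    (Δ' : Fin K → Fin M → ℝ)
    (hgap : ∀ m, ∀ k, k ≠ kstar m → Δ' k m = μ' (kstar m) m - μ' k m)
    (hgapstar : ∀ m, IsLeast {d : ℝ | ∃ k, k ≠ kstar m ∧ d = Δ' k m} (Δ' (kstar m) m))
    (hgappos : ∀ k m, 0 < Δ' k m)
    (t : Fin K → Fin M → ℝ) (htpos : ∀ k m, 0 < t k m)
    (hrelax : ∀ m, ∀ k, ∑ n, (w n m) ^ 2 / t k n ≤ (Δ' k m) ^ 2 / 2) :
    ∀ m, ∀ k, k ≠ kstar m →
      ∑ n, (w n m) ^ 2 * (1 / (2 * t k n) + 1 / (2 * t (kstar m) n))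
        ≤ (Δ' k m) ^ 2 / 2 := by
  intro m k hk
  have hle : Δ' (kstar m) m ≤ Δ' k m := (hgapstar m).2 ⟨k, hk, rfl⟩
  have h1 := hrelax m k
  have h2 := hrelax m (kstar m)
  have hsum : ∑ n, (w n m) ^ 2 * (1 / (2 * t k n) + 1 / (2 * t (kstar m) n))
      = (∑ n, (w n m) ^ 2 / t k n) / 2 + (∑ n, (w n m) ^ 2 / t (kstar m) n) / 2 := by
    rw [Finset.sum_div, Finset.sum_div, ← Finset.sum_add_distrib]
    refine Finset.sum_congr rfl fun n _ => ?_
    have h1 := (htpos k n).ne'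
    have h2 := (htpos (kstar m) n).ne'
    field_simp
  rw [hsum]
  have hsq : (Δ' (kstar m) m) ^ 2 ≤ (Δ' k m) ^ 2 :=
    pow_le_pow_left₀ (hgappos _ _).le hle 2
  nlinarith
end
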